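/- arXiv:1404.4547 — 3 statements merged into one kernel-verified Lean document; each statement's English description precedes it below -/
import Mathlib

section
/- Let X and Y be Gamma-distributed random variables with shape parameters a, b > 0 and rate parameters α, β > 0 respectively. If E X = E Y (i.e. a/α = b/β) and Var X ≤ Var Y (i.e. a/α² ≤ b/β²), then X ≤_cx Y, i.e. E f(X) ≤ E f(Y) for every convex function f : ℝ → ℝ for which both expectations exist. -/
/-!
Equal means together with `a / α ^ 2 ≤ b / β ^ 2` force `b ≤ a` and `β ≤ α`; the case of equality
is trivial. Otherwise, on `(0, ∞)` the log-ratio of the density `q` of `Gamma(b, β)` to the density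
`p` of `Gamma(a, α)` is `(b - a) log x + (α - β) x + const`, a convex function tending to `+∞` at
both ends of `(0, ∞)`. So either `p ≤ q` everywhere, and then `p = q` a.e. since both have mass one,
or `q - p` is `≤ 0` exactly between two zeros `x₁ < x₂` and `≥ 0` outside. In the second case let
`ℓ` be the secant of `f` through `x₁` and `x₂`: then `(f - ℓ) (q - p) ≥ 0`, while
`∫ ℓ (q - p) = 0` because `p` and `q` have equal masses and equal means, so `∫ f p ≤ ∫ f q`
(the Karlin–Novikoff cut criterion).
-/

open MeasureTheory ProbabilityTheory Real Set Filter Topology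

section SignPattern

variable {𝕜 : Type*} [Field 𝕜] [LinearOrder 𝕜] [IsStrictOrderedRing 𝕜] {s : Set 𝕜} {g : 𝕜 → 𝕜}
  {x₁ x₂ z : 𝕜}

lemma ConvexOn.nonpos_of_mem_Icc (hg : ConvexOn 𝕜 s g) (h₁ : x₁ ∈ s) (h₂ : x₂ ∈ s)
    (hg₁ : g x₁ = 0) (hg₂ : g x₂ = 0) (hz : z ∈ Icc x₁ x₂) : g z ≤ 0 := by
  have := hg.le_on_segment h₁ h₂ (segment_eq_Icc (hz.1.trans hz.2) ▸ hz)
  simpa [hg₁, hg₂] using this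

lemma ConvexOn.nonneg_of_notMem_Ioo (hg : ConvexOn 𝕜 s g) (h₁ : x₁ ∈ s) (h₂ : x₂ ∈ s)
    (h₁₂ : x₁ < x₂) (hg₁ : g x₁ = 0) (hg₂ : g x₂ = 0) (hz : z ∈ s) (hz' : z ∉ Ioo x₁ x₂) :
    0 ≤ g z := by
  rcases le_or_gt z x₁ with hzx | hxz
  · simpa [hg₁] using hg.le_left_of_right_le'' hz h₂ hzx h₁₂ (by rw [hg₁, hg₂])
  · have : x₂ ≤ z := not_lt.1 fun h => hz' ⟨hxz, h⟩
    simpa [hg₂] using hg.le_right_of_left_le'' h₁ hz h₁₂ this (by rw [hg₁, hg₂])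

end SignPattern

lemma integral_mul_sub_eq_zero_of_ae_le {Ω : Type*} [MeasurableSpace Ω] {μ : Measure Ω}
    {f p q : Ω → ℝ} (hp : Integrable p μ) (hq : Integrable q μ) (hpq : p ≤ᵐ[μ] q)
    (h : ∫ x, p x ∂μ = ∫ x, q x ∂μ) : ∫ x, f x * (q x - p x) ∂μ = 0 := by
  refine integral_eq_zero_of_ae ?_
  filter_upwards [(integral_eq_iff_of_ae_le hp hq hpq).1 h] with x hx
  simp [hx]

theorem integral_mul_nonneg_of_convexOn_of_sign_change {μ : Measure ℝ} {f d : ℝ → ℝ}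
    (hf : ConvexOn ℝ univ f) {x₁ x₂ : ℝ} (h₁₂ : x₁ < x₂)
    (hin : ∀ᵐ x ∂μ, x ∈ Icc x₁ x₂ → d x ≤ 0) (hout : ∀ᵐ x ∂μ, x ∉ Ioo x₁ x₂ → 0 ≤ d x)
    (hd : Integrable d μ) (hxd : Integrable (fun x => x * d x) μ)
    (hd₀ : ∫ x, d x ∂μ = 0) (hxd₀ : ∫ x, x * d x ∂μ = 0)
    (hfd : Integrable (fun x => f x * d x) μ) :
    0 ≤ ∫ x, f x * d x ∂μ := by
  set s := slope f x₁ x₂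
  set c := f x₁ - s * x₁
  have hg : ConvexOn ℝ univ (fun x => f x - (c + s * x)) :=
    hf.sub ((concaveOn_const c convex_univ).add ((LinearMap.mulLeft ℝ s).concaveOn convex_univ))
  have hg₁ : f x₁ - (c + s * x₁) = 0 := by ring
  have hg₂ : f x₂ - (c + s * x₂) = 0 := by
    simp only [c, s, slope_def_field]; field_simp [sub_ne_zero.2 h₁₂.ne']; ring
  have hsecd : Integrable (fun x => (c + s * x) * d x) μ := by
    simp only [add_mul, mul_assoc]
    exact (hd.const_mul c).add (hxd.const_mul s)
  have hsecd₀ : ∫ x, (c + s * x) * d x ∂μ = 0 := by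
    simp only [add_mul, mul_assoc]
    rw [integral_add (hd.const_mul c) (hxd.const_mul s), integral_const_mul, integral_const_mul,
      hd₀, hxd₀]
    ring
  have hsign : 0 ≤ᵐ[μ] fun x => (f x - (c + s * x)) * d x := by
    filter_upwards [hin, hout] with x hin hout
    by_cases hx : x ∈ Ioo x₁ x₂
    · exact mul_nonneg_of_nonpos_of_nonpos
        (hg.nonpos_of_mem_Icc trivial trivial hg₁ hg₂ (Ioo_subset_Icc_self hx))
        (hin (Ioo_subset_Icc_self hx))
    · exact mul_nonneg (hg.nonneg_of_notMem_Ioo trivial trivial h₁₂ hg₁ hg₂ trivial hx) (hout hx)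
  calc 0 ≤ ∫ x, (f x - (c + s * x)) * d x ∂μ := integral_nonneg_of_ae hsign
    _ = ∫ x, f x * d x ∂μ := by
      simp only [sub_mul]
      rw [integral_sub hfd hsecd, hsecd₀, sub_zero]

section LogLinear

variable {k m c : ℝ}

lemma convexOn_mul_log_add_mul_add (hk : k ≤ 0) :
    ConvexOn ℝ (Ioi 0) fun x => k * log x + m * x + c := by
  have hlog : ConvexOn ℝ (Ioi 0) fun x => k * log x :=
    (strictConcaveOn_log_Ioi.concaveOn.neg.smul (neg_nonneg.2 hk)).congr fun x _ => by
      simp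
  exact (hlog.add ((LinearMap.mulLeft ℝ m).convexOn (convex_Ioi 0))).add_const c

lemma tendsto_mul_log_add_mul_add_nhdsGT_zero (hk : k < 0) :
    Tendsto (fun x => k * log x + m * x + c) (𝓝[>] 0) atTop := by
  have hlin : Tendsto (fun x => m * x + c) (𝓝[>] 0) (𝓝 (m * 0 + c)) :=
    ((continuous_const.mul continuous_id).add continuous_const).tendsto 0 |>.mono_left
      nhdsWithin_le_nhds
  simpa only [add_assoc] using
    (tendsto_log_nhdsGT_zero.const_mul_atBot_of_neg hk).atTop_add hlin

lemma tendsto_mul_log_add_mul_add_atTop (hm : 0 < m) :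
    Tendsto (fun x => k * log x + m * x + c) atTop atTop := by
  have hlog : (fun x => k * log x) =o[atTop] fun x => m * x :=
    (isLittleO_log_id_atTop.const_mul_left k).const_mul_right hm.ne'
  have := (hlog.add_isEquivalent (Asymptotics.IsEquivalent.refl)).symm.tendsto_atTop
    (tendsto_id.const_mul_atTop hm)
  exact tendsto_atTop_add_const_right _ c this

end LogLinear

lemma exists_zeros_of_tendsto_atTop {φ : ℝ → ℝ} (hφ : ContinuousOn φ (Ioi 0))
    (h₀ : Tendsto φ (𝓝[>] 0) atTop) (h_top : Tendsto φ atTop atTop) {x₀ : ℝ} (hx₀ : 0 < x₀)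
    (hφx₀ : φ x₀ < 0) : ∃ x₁ x₂, 0 < x₁ ∧ x₁ < x₂ ∧ φ x₁ = 0 ∧ φ x₂ = 0 := by
  obtain ⟨u, ⟨hu₀, hux₀⟩, hφu⟩ : ∃ u ∈ Ioo 0 x₀, 0 < φ u :=
    ((h₀.eventually_gt_atTop 0).and (Ioo_mem_nhdsGT hx₀)).exists.imp fun _ h => ⟨h.2, h.1⟩
  obtain ⟨v, hx₀v, hφv⟩ : ∃ v, x₀ < v ∧ 0 < φ v :=
    ((eventually_gt_atTop x₀).and (h_top.eventually_gt_atTop 0)).exists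
  obtain ⟨x₁, hx₁, hφx₁⟩ := intermediate_value_Icc' hux₀.le
    (hφ.mono fun x hx => hu₀.trans_le hx.1) ⟨hφx₀.le, hφu.le⟩
  obtain ⟨x₂, hx₂, hφx₂⟩ := intermediate_value_Icc hx₀v.le
    (hφ.mono fun x hx => hx₀.trans_le hx.1) ⟨hφx₀.le, hφv.le⟩
  have hx₁x₀ : x₁ < x₀ := hx₁.2.lt_of_ne (by rintro rfl; linarith)
  have hx₀x₂ : x₀ < x₂ := hx₂.1.lt_of_ne (by rintro rfl; linarith)
  exact ⟨x₁, x₂, hu₀.trans_le hx₁.1, hx₁x₀.trans hx₀x₂, hφx₁, hφx₂⟩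

section Gamma

variable {a b r α β : ℝ}

lemma gammaPDFReal_of_neg {x : ℝ} (hx : x < 0) : gammaPDFReal a r x = 0 :=
  if_neg (not_le.2 hx)

lemma integral_gammaMeasure (ha : 0 < a) (hr : 0 < r) (g : ℝ → ℝ) :
    ∫ x, g x ∂gammaMeasure a r = ∫ x, g x * gammaPDFReal a r x := by
  rw [gammaMeasure, integral_withDensity_eq_integral_toReal_smul (f := gammaPDF a r)
    (measurable_gammaPDFReal a r).ennreal_ofReal (ae_of_all _ fun _ => ENNReal.ofReal_lt_top)]
  congr with x
  rw [gammaPDF, ENNReal.toReal_ofReal (gammaPDFReal_nonneg ha hr x), smul_eq_mul, mul_comm]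

lemma integrable_gammaMeasure_iff (ha : 0 < a) (hr : 0 < r) {g : ℝ → ℝ} :
    Integrable g (gammaMeasure a r) ↔ Integrable fun x => g x * gammaPDFReal a r x := by
  rw [gammaMeasure, integrable_withDensity_iff (f := gammaPDF a r)
    (measurable_gammaPDFReal a r).ennreal_ofReal (ae_of_all _ fun _ => ENNReal.ofReal_lt_top)]
  simp only [gammaPDF, ENNReal.toReal_ofReal (gammaPDFReal_nonneg ha hr _)]

lemma integrable_gammaPDFReal (ha : 0 < a) (hr : 0 < r) : Integrable (gammaPDFReal a r) := by
  have := isProbabilityMeasure_gammaMeasure ha hr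
  simpa using (integrable_gammaMeasure_iff ha hr).1 (integrable_const (1 : ℝ))

lemma integral_gammaPDFReal (ha : 0 < a) (hr : 0 < r) : ∫ x, gammaPDFReal a r x = 1 := by
  have := isProbabilityMeasure_gammaMeasure ha hr
  simpa using (integral_gammaMeasure ha hr fun _ => 1).symm

lemma mul_gammaPDFReal (ha : 0 < a) (hr : 0 < r) (x : ℝ) :
    x * gammaPDFReal a r x = a / r * gammaPDFReal (a + 1) r x := by
  unfold gammaPDFReal
  split_ifs with hx
  · have hxa : x ^ a = x * x ^ (a - 1) := by rw [← rpow_one_add' hx (by linarith), add_sub_cancel]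
    rw [rpow_add_one hr.ne', Gamma_add_one ha.ne', add_sub_cancel_right, hxa]
    field_simp [(Gamma_pos_of_pos ha).ne']
  · simp

lemma integrable_mul_gammaPDFReal (ha : 0 < a) (hr : 0 < r) :
    Integrable fun x => x * gammaPDFReal a r x := by
  simp_rw [mul_gammaPDFReal ha hr]
  exact (integrable_gammaPDFReal (by linarith) hr).const_mul _

lemma integral_mul_gammaPDFReal (ha : 0 < a) (hr : 0 < r) :
    ∫ x, x * gammaPDFReal a r x = a / r := by
  simp_rw [mul_gammaPDFReal ha hr]
  rw [integral_const_mul, integral_gammaPDFReal (by linarith) hr, mul_one]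

noncomputable def gammaLogRatio (a α b β x : ℝ) : ℝ :=
  (b - a) * log x + (α - β) * x + log (β ^ b * Gamma a / (α ^ a * Gamma b))

lemma gammaPDFReal_eq_mul_exp_gammaLogRatio (ha : 0 < a) (hb : 0 < b) (hα : 0 < α) (hβ : 0 < β)
    {x : ℝ} (hx : 0 < x) :
    gammaPDFReal b β x = gammaPDFReal a α x * exp (gammaLogRatio a α b β x) := by
  have hΓa := Gamma_pos_of_pos ha
  have hΓb := Gamma_pos_of_pos hb
  have hxb : x ^ (b - 1) = x ^ (a - 1) * exp ((b - a) * log x) := by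
    rw [mul_comm (b - a), ← rpow_def_of_pos hx, ← rpow_add hx]; ring_nf
  have hexp : exp (-(β * x)) = exp (-(α * x)) * exp ((α - β) * x) := by
    rw [← exp_add]; ring_nf
  simp only [gammaPDFReal, gammaLogRatio, if_pos hx.le, exp_add,
    exp_log (by positivity : 0 < β ^ b * Gamma a / (α ^ a * Gamma b)), hxb, hexp]
  field_simp

lemma gammaPDFReal_le_of_gammaLogRatio_nonpos (ha : 0 < a) (hb : 0 < b) (hα : 0 < α)
    (hβ : 0 < β) {x : ℝ} (hx : 0 < x) (h : gammaLogRatio a α b β x ≤ 0) :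
    gammaPDFReal b β x ≤ gammaPDFReal a α x := by
  rw [gammaPDFReal_eq_mul_exp_gammaLogRatio ha hb hα hβ hx]
  exact mul_le_of_le_one_right (gammaPDFReal_nonneg ha hα x) (exp_le_one_iff.2 h)

lemma gammaPDFReal_le_of_gammaLogRatio_nonneg (ha : 0 < a) (hb : 0 < b) (hα : 0 < α)
    (hβ : 0 < β) {x : ℝ} (hx : 0 < x) (h : 0 ≤ gammaLogRatio a α b β x) :
    gammaPDFReal a α x ≤ gammaPDFReal b β x := by
  rw [gammaPDFReal_eq_mul_exp_gammaLogRatio ha hb hα hβ hx]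
  exact le_mul_of_one_le_right (gammaPDFReal_nonneg ha hα x) (one_le_exp_iff.2 h)

lemma gammaPDFReal_sub_sign_change (ha : 0 < a) (hb : 0 < b) (hα : 0 < α) (hβ : 0 < β)
    (hba : b < a) (hβα : β < α) (hφ : ∃ x₀, 0 < x₀ ∧ gammaLogRatio a α b β x₀ < 0) :
    ∃ x₁ x₂, x₁ < x₂ ∧
      (∀ᵐ x, x ∈ Icc x₁ x₂ → gammaPDFReal b β x - gammaPDFReal a α x ≤ 0) ∧
      (∀ᵐ x, x ∉ Ioo x₁ x₂ → 0 ≤ gammaPDFReal b β x - gammaPDFReal a α x) := by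
  obtain ⟨x₀, hx₀, hφx₀⟩ := hφ
  have hφc : ConvexOn ℝ (Ioi 0) (gammaLogRatio a α b β) :=
    convexOn_mul_log_add_mul_add (by linarith)
  obtain ⟨x₁, x₂, hx₁, h₁₂, hφ₁, hφ₂⟩ := exists_zeros_of_tendsto_atTop
    (hφc.continuousOn isOpen_Ioi) (tendsto_mul_log_add_mul_add_nhdsGT_zero (by linarith))
    (tendsto_mul_log_add_mul_add_atTop (by linarith)) hx₀ hφx₀
  have hx₂ : 0 < x₂ := hx₁.trans h₁₂
  refine ⟨x₁, x₂, h₁₂, ae_of_all _ fun x hx => sub_nonpos.2 ?_, ?_⟩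
  · exact gammaPDFReal_le_of_gammaLogRatio_nonpos ha hb hα hβ (hx₁.trans_le hx.1)
      (hφc.nonpos_of_mem_Icc hx₁ hx₂ hφ₁ hφ₂ hx)
  · filter_upwards [Measure.ae_ne volume 0] with x hx₀ hx
    refine sub_nonneg.2 ?_
    rcases hx₀.lt_or_gt with hx₀ | hx₀
    · simp [gammaPDFReal_of_neg hx₀]
    · exact gammaPDFReal_le_of_gammaLogRatio_nonneg ha hb hα hβ hx₀
        (hφc.nonneg_of_notMem_Ioo hx₁ hx₂ h₁₂ hφ₁ hφ₂ hx₀ hx)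

lemma integral_mul_gammaPDFReal_sub_nonneg (ha : 0 < a) (hb : 0 < b) (hα : 0 < α) (hβ : 0 < β)
    (hba : b < a) (hβα : β < α) (hmean : a / α = b / β) {f : ℝ → ℝ} (hf : ConvexOn ℝ univ f)
    (hfa : Integrable fun x => f x * gammaPDFReal a α x)
    (hfb : Integrable fun x => f x * gammaPDFReal b β x) :
    0 ≤ ∫ x, f x * (gammaPDFReal b β x - gammaPDFReal a α x) := by
  by_cases hφ : ∀ x, 0 < x → 0 ≤ gammaLogRatio a α b β x
  · have hle : gammaPDFReal a α ≤ᵐ[volume] gammaPDFReal b β := by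
      filter_upwards [Measure.ae_ne volume 0] with x hx
      rcases hx.lt_or_gt with hx | hx
      · simp [gammaPDFReal_of_neg hx]
      · exact gammaPDFReal_le_of_gammaLogRatio_nonneg ha hb hα hβ hx (hφ x hx)
    exact (integral_mul_sub_eq_zero_of_ae_le (integrable_gammaPDFReal ha hα)
      (integrable_gammaPDFReal hb hβ) hle (by rw [integral_gammaPDFReal ha hα,
        integral_gammaPDFReal hb hβ])).ge
  push Not at hφ
  obtain ⟨x₁, x₂, h₁₂, hin, hout⟩ := gammaPDFReal_sub_sign_change ha hb hα hβ hba hβα hφ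
  have hfd : Integrable fun x => f x * (gammaPDFReal b β x - gammaPDFReal a α x) := by
    simp only [mul_sub]
    exact hfb.sub hfa
  refine integral_mul_nonneg_of_convexOn_of_sign_change hf h₁₂ hin hout
    ((integrable_gammaPDFReal hb hβ).sub (integrable_gammaPDFReal ha hα)) ?_ ?_ ?_ hfd
  · simp only [mul_sub]
    exact (integrable_mul_gammaPDFReal hb hβ).sub (integrable_mul_gammaPDFReal ha hα)
  · rw [integral_sub (integrable_gammaPDFReal hb hβ) (integrable_gammaPDFReal ha hα),
      integral_gammaPDFReal ha hα, integral_gammaPDFReal hb hβ, sub_self]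
  · simp only [mul_sub]
    rw [integral_sub (integrable_mul_gammaPDFReal hb hβ) (integrable_mul_gammaPDFReal ha hα),
      integral_mul_gammaPDFReal ha hα, integral_mul_gammaPDFReal hb hβ, hmean, sub_self]

end Gamma

lemma lt_and_lt_or_eq_and_eq_of_div_eq_of_div_sq_le {a b α β : ℝ} (ha : 0 < a) (hα : 0 < α)
    (hβ : 0 < β) (hmean : a / α = b / β) (hvar : a / α ^ 2 ≤ b / β ^ 2) :
    (b < a ∧ β < α) ∨ (b = a ∧ β = α) := by
  rw [div_eq_div_iff hα.ne' hβ.ne'] at hmean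
  rw [div_le_div_iff₀ (by positivity) (by positivity)] at hvar
  have hb : 0 < b := by nlinarith
  have hβα : β ≤ α := by nlinarith [mul_pos hb hα]
  rcases hβα.lt_or_eq with hβα | rfl
  · exact Or.inl ⟨by nlinarith, hβα⟩
  · exact Or.inr ⟨by nlinarith, rfl⟩

theorem integral_gammaMeasure_le_of_convexOn {a b α β : ℝ} (ha : 0 < a) (hb : 0 < b)
    (hα : 0 < α) (hβ : 0 < β) (hmean : a / α = b / β) (hvar : a / α ^ 2 ≤ b / β ^ 2)
    {f : ℝ → ℝ} (hf : ConvexOn ℝ univ f) (hfa : Integrable f (gammaMeasure a α))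
    (hfb : Integrable f (gammaMeasure b β)) :
    ∫ x, f x ∂gammaMeasure a α ≤ ∫ x, f x ∂gammaMeasure b β := by
  obtain ⟨hba, hβα⟩ | ⟨rfl, rfl⟩ :=
    lt_and_lt_or_eq_and_eq_of_div_eq_of_div_sq_le ha hα hβ hmean hvar
  · rw [integrable_gammaMeasure_iff ha hα] at hfa
    rw [integrable_gammaMeasure_iff hb hβ] at hfb
    rw [integral_gammaMeasure ha hα, integral_gammaMeasure hb hβ, ← sub_nonneg,
      ← integral_sub hfb hfa]
    simpa only [mul_sub] using
      integral_mul_gammaPDFReal_sub_nonneg ha hb hα hβ hba hβα hmean hf hfa hfb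
  · rfl

theorem stmt_5_general {Ω : Type*} [MeasureSpace Ω] (μ : Measure Ω)
    (a b α β : ℝ) (ha : 0 < a) (hb : 0 < b) (hα : 0 < α) (hβ : 0 < β)
    (X Y : Ω → ℝ) (hXm : Measurable X) (hYm : Measurable Y)
    (hX : Measure.map X μ = gammaMeasure a α)
    (hY : Measure.map Y μ = gammaMeasure b β)
    (hmean : a / α = b / β) (hvar : a / α ^ 2 ≤ b / β ^ 2)
    (f : ℝ → ℝ) (hf : ConvexOn ℝ Set.univ f)
    (hfX : Integrable (fun ω => f (X ω)) μ)
    (hfY : Integrable (fun ω => f (Y ω)) μ) :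
    ∫ ω, f (X ω) ∂μ ≤ ∫ ω, f (Y ω) ∂μ := by
  have hfc : Continuous f := continuousOn_univ.1 (hf.continuousOn isOpen_univ)
  rw [← integral_map hXm.aemeasurable hfc.aestronglyMeasurable,
    ← integral_map hYm.aemeasurable hfc.aestronglyMeasurable, hX, hY]
  refine integral_gammaMeasure_le_of_convexOn ha hb hα hβ hmean hvar hf ?_ ?_
  · rwa [← hX, integrable_map_measure hfc.aestronglyMeasurable hXm.aemeasurable]
  · rwa [← hY, integrable_map_measure hfc.aestronglyMeasurable hYm.aemeasurable]

/-- Convex order within the Gamma family: if `X ~ Gamma(a, α)` and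
`Y ~ Gamma(b, β)` have equal means (`a/α = b/β`) and ordered variances
(`a/α² ≤ b/β²`), then `E f(X) ≤ E f(Y)` for every convex `f : ℝ → ℝ` for
which both expectations exist. -/
theorem stmt_5 {Ω : Type*} [MeasureSpace Ω] (μ : Measure Ω) [IsProbabilityMeasure μ]
    (a b α β : ℝ) (ha : 0 < a) (hb : 0 < b) (hα : 0 < α) (hβ : 0 < β)
    (X Y : Ω → ℝ) (hXm : Measurable X) (hYm : Measurable Y)
    (hX : Measure.map X μ = gammaMeasure a α)
    (hY : Measure.map Y μ = gammaMeasure b β)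
    (hmean : a / α = b / β) (hvar : a / α ^ 2 ≤ b / β ^ 2)
    (f : ℝ → ℝ) (hf : ConvexOn ℝ Set.univ f)
    (hfX : Integrable (fun ω => f (X ω)) μ)
    (hfY : Integrable (fun ω => f (Y ω)) μ) :
    ∫ ω, f (X ω) ∂μ ≤ ∫ ω, f (Y ω) ∂μ :=
  stmt_5_general μ a b α β ha hb hα hβ X Y hXm hYm hX hY hmean hvar f hf hfX hfY
end

section
/- Let W_0 = 0 and W_n = max(W_{n-1} + S_n − T_n, 0) where (S_n − T_n)_{n∈ℤ} is a stationary ergodic sequence with E(S_n − T_n) < 0. Then W_n converges in distribution to W = max(0, sup_{n ≥ 0} Σ_{n'=0}^{n} (S_{−n'} − T_{−n'})), and W is almost surely finite. -/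
open MeasureTheory Filter

/-- Loynes' theorem: for a stationary ergodic sequence `(Sₙ, Tₙ)_{n∈ℤ}`
(realized by an ergodic measure-preserving shift `θ`) with `E S < E T`,
the Lindley waiting times `Wₙ` converge in distribution to
`W = max (0, sup_{n ≥ 0} ∑_{n'=0}^{n} (S_{−n'} − T_{−n'}))`, which is almost
surely finite. -/
theorem stmt_9 {Ω : Type*} [MeasureSpace Ω] (μ : Measure Ω) [IsProbabilityMeasure μ]
    (θ : Ω → Ω) (hθ : Ergodic θ μ)
    (S T : ℤ → Ω → ℝ)
    (hSm : ∀ n, Measurable (S n)) (hTm : ∀ n, Measurable (T n))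
    (hSnn : ∀ n ω, 0 ≤ S n ω) (hTnn : ∀ n ω, 0 ≤ T n ω)
    (hshiftS : ∀ (n : ℤ) (ω : Ω), S n (θ ω) = S (n + 1) ω)
    (hshiftT : ∀ (n : ℤ) (ω : Ω), T n (θ ω) = T (n + 1) ω)
    (hSint : Integrable (S 1) μ) (hTint : Integrable (T 1) μ)
    (hstab : ∫ ω, S 1 ω ∂μ < ∫ ω, T 1 ω ∂μ)
    (W : ℕ → Ω → ℝ) (hW0 : ∀ ω, W 0 ω = 0)
    (hWrec : ∀ (n : ℕ) (ω : Ω),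
      W (n + 1) ω = max (W n ω + S ((n : ℤ) + 1) ω - T ((n : ℤ) + 1) ω) 0) :
    (∀ᵐ ω ∂μ, BddAbove
      (Set.range fun n : ℕ =>
        ∑ n' ∈ Finset.range (n + 1), (S (-(n' : ℤ)) ω - T (-(n' : ℤ)) ω))) ∧
    (∀ f : BoundedContinuousFunction ℝ ℝ,
      Filter.Tendsto (fun n => ∫ ω, f (W n ω) ∂μ) Filter.atTop
        (nhds (∫ ω, f (max 0 (⨆ n : ℕ,
          ∑ n' ∈ Finset.range (n + 1), (S (-(n' : ℤ)) ω - T (-(n' : ℤ)) ω))) ∂μ))) := by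
  classical
  have hmp : MeasurePreserving θ μ μ := hθ.toMeasurePreserving
  set X1 : Ω → ℝ := fun ω => S 1 ω - T 1 ω with hX1def
  set Y : ℕ → Ω → ℝ :=
    fun k ω => ∑ n' ∈ Finset.range (k + 1), (S (-(n' : ℤ)) ω - T (-(n' : ℤ)) ω) with hYdef
  set M : ℕ → Ω → ℝ := fun n ω => (Finset.range n).fold max 0 (fun k => Y k ω) with hMdef
  -- iterates of the shift
  have hSiter : ∀ (k : ℕ) (n : ℤ) (ω : Ω), S n (θ^[k] ω) = S (n + k) ω := by
    intro k
    induction k with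
    | zero => intro n ω; simp
    | succ k ih =>
      intro n ω
      rw [Function.iterate_succ_apply, ih, hshiftS]
      congr 1
      push_cast
      ring
  have hTiter : ∀ (k : ℕ) (n : ℤ) (ω : Ω), T n (θ^[k] ω) = T (n + k) ω := by
    intro k
    induction k with
    | zero => intro n ω; simp
    | succ k ih =>
      intro n ω
      rw [Function.iterate_succ_apply, ih, hshiftT]
      congr 1
      push_cast
      ring
  have hX1iter : ∀ (k : ℕ) (ω : Ω), X1 (θ^[k] ω) = S ((k : ℤ) + 1) ω - T ((k : ℤ) + 1) ω := by
    intro k ω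
    simp only [hX1def]
    rw [hSiter, hTiter]
    have h : (1 : ℤ) + (k : ℤ) = (k : ℤ) + 1 := by ring
    rw [h]
  -- shift relations for Y
  have hYshift0 : ∀ ω, Y 0 (θ ω) = X1 ω := by
    intro ω
    simp only [hYdef, hX1def]
    rw [Finset.sum_range_one]
    simp only [Nat.cast_zero, neg_zero]
    rw [hshiftS 0 ω, hshiftT 0 ω]
    norm_num
  have hYshift : ∀ (k : ℕ) (ω : Ω), Y (k + 1) (θ ω) = X1 ω + Y k ω := by
    intro k ω
    simp only [hYdef, hX1def]
    rw [Finset.sum_range_succ']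
    have h0 : S (-((0 : ℕ) : ℤ)) (θ ω) - T (-((0 : ℕ) : ℤ)) (θ ω) = S 1 ω - T 1 ω := by
      rw [hshiftS, hshiftT]; norm_num
    have h1 : ∀ i ∈ Finset.range (k + 1),
        (S (-((i + 1 : ℕ) : ℤ)) (θ ω) - T (-((i + 1 : ℕ) : ℤ)) (θ ω))
          = (S (-(i : ℤ)) ω - T (-(i : ℤ)) ω) := by
      intro i _
      rw [hshiftS, hshiftT]
      have h : -((i + 1 : ℕ) : ℤ) + 1 = -(i : ℤ) := by push_cast; ring
      rw [h]
    rw [Finset.sum_congr rfl h1, h0, add_comm]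
  -- basic facts about M
  have hM0 : ∀ ω, M 0 ω = 0 := by intro ω; simp [hMdef]
  have hMsucc : ∀ (n : ℕ) (ω : Ω), M (n + 1) ω = max (Y n ω) (M n ω) := by
    intro n ω
    simp only [hMdef]
    rw [Finset.range_add_one, Finset.fold_insert Finset.notMem_range_self]
  have hMnonneg : ∀ (n : ℕ) (ω : Ω), 0 ≤ M n ω := by
    intro n ω
    induction n with
    | zero => rw [hM0]
    | succ n ih => rw [hMsucc]; exact le_max_of_le_right ih
  have hMmono : ∀ (n : ℕ) (ω : Ω), M n ω ≤ M (n + 1) ω := by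
    intro n ω; rw [hMsucc]; exact le_max_right _ _
  have hYleM : ∀ (k : ℕ) (ω : Ω), Y k ω ≤ M (k + 1) ω := by
    intro k ω; rw [hMsucc]; exact le_max_left _ _
  have hMleOfY : ∀ (c : ℝ) (ω : Ω), (∀ k, Y k ω ≤ c) → ∀ n, M n ω ≤ max 0 c := by
    intro c ω h n
    induction n with
    | zero => rw [hM0]; exact le_max_left _ _
    | succ n ih => rw [hMsucc]; exact max_le ((h n).trans (le_max_right _ _)) ih
  have hMshift : ∀ (n : ℕ) (ω : Ω), M (n + 1) (θ ω) = max 0 (X1 ω + M n ω) := by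
    intro n ω
    induction n with
    | zero =>
      rw [hMsucc, hYshift0, hM0, hM0, add_zero, max_comm]
    | succ n ih =>
      rw [hMsucc, hYshift, ih, hMsucc, ← max_add_add_left, max_left_comm]
  have hMshift' : ∀ (n : ℕ) (ω : Ω),
      M (n + 1) (θ ω) = M n ω + max (-(M n ω)) (X1 ω) := by
    intro n ω
    rw [hMshift]
    rcases le_total (-(M n ω)) (X1 ω) with h | h
    · rw [max_eq_right h, max_eq_right (by linarith : (0 : ℝ) ≤ X1 ω + M n ω)]; ring
    · rw [max_eq_left h, max_eq_left (by linarith : X1 ω + M n ω ≤ 0)]; ring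
  -- identification of W with shifted M
  have hWM : ∀ (n : ℕ) (ω : Ω), W n ω = M n (θ^[n] ω) := by
    intro n ω
    induction n with
    | zero => rw [hW0, Function.iterate_zero_apply, hM0]
    | succ n ih =>
      rw [hWrec, ih, Function.iterate_succ_apply', hMshift]
      rw [show X1 (θ^[n] ω) = S ((n : ℤ) + 1) ω - T ((n : ℤ) + 1) ω from hX1iter n ω]
      rw [max_comm]
      congr 1
      ring
  -- measurability
  have hX1m : Measurable X1 := (hSm 1).sub (hTm 1)
  have hYm : ∀ k, Measurable (Y k) := by
    intro k
    exact Finset.measurable_sum _ fun i _ => (hSm _).sub (hTm _)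
  have hMm : ∀ n, Measurable (M n) := by
    intro n
    induction n with
    | zero =>
      have h : M 0 = fun _ => (0 : ℝ) := funext hM0
      rw [h]; exact measurable_const
    | succ n ih =>
      have h : M (n + 1) = fun ω => max (Y n ω) (M n ω) := funext (hMsucc n)
      rw [h]; exact (hYm n).max ih
  -- integrability
  have hX1int : Integrable X1 μ := hSint.sub hTint
  have hSnegint : ∀ j : ℕ, Integrable (S (-(j : ℤ))) μ := by
    intro j
    have hmpk : MeasurePreserving (θ^[j + 1]) μ μ := hmp.iterate (j + 1)
    have hcomp : (S (-(j : ℤ))) ∘ (θ^[j + 1]) = S 1 := by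
      funext ω
      simp only [Function.comp_apply]
      rw [hSiter]
      congr 1
      push_cast
      ring
    have h := hmpk.integrable_comp (g := S (-(j : ℤ))) (hSm _).aestronglyMeasurable
    rw [hcomp] at h
    exact h.mp hSint
  have hTnegint : ∀ j : ℕ, Integrable (T (-(j : ℤ))) μ := by
    intro j
    have hmpk : MeasurePreserving (θ^[j + 1]) μ μ := hmp.iterate (j + 1)
    have hcomp : (T (-(j : ℤ))) ∘ (θ^[j + 1]) = T 1 := by
      funext ω
      simp only [Function.comp_apply]
      rw [hTiter]
      congr 1
      push_cast
      ring
    have h := hmpk.integrable_comp (g := T (-(j : ℤ))) (hTm _).aestronglyMeasurable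
    rw [hcomp] at h
    exact h.mp hTint
  have hYint : ∀ k, Integrable (Y k) μ := by
    intro k
    exact integrable_finset_sum _ fun i _ => (hSnegint i).sub (hTnegint i)
  have hMint : ∀ n, Integrable (M n) μ := by
    intro n
    induction n with
    | zero =>
      have h : M 0 = fun _ => (0 : ℝ) := funext hM0
      rw [h]; exact integrable_const 0
    | succ n ih =>
      have h : M (n + 1) = fun ω => max (Y n ω) (M n ω) := funext (hMsucc n)
      rw [h]; exact (hYint n).sup ih
  -- integral invariance under iterates
  have hint_comp : ∀ (k : ℕ) (g : Ω → ℝ), AEStronglyMeasurable g μ →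
      ∫ ω, g (θ^[k] ω) ∂μ = ∫ ω, g ω ∂μ := by
    intro k g hg
    have hmpk : MeasurePreserving (θ^[k]) μ μ := hmp.iterate k
    rw [← integral_map hmpk.measurable.aemeasurable (by rwa [hmpk.map_eq]), hmpk.map_eq]
  -- the invariant set
  set A : Set Ω := {ω | BddAbove (Set.range fun k => Y k ω)} with hAdef
  have hAeq : A = ⋃ (m : ℕ), ⋂ (k : ℕ), {ω | Y k ω ≤ (m : ℝ)} := by
    ext ω
    simp only [hAdef, Set.mem_setOf_eq, Set.mem_iUnion, Set.mem_iInter]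
    constructor
    · rintro ⟨c, hc⟩
      obtain ⟨m, hm⟩ := exists_nat_ge c
      exact ⟨m, fun k => ((hc (Set.mem_range_self k)).trans hm)⟩
    · rintro ⟨m, hm⟩
      exact ⟨m, by rintro x ⟨k, rfl⟩; exact hm k⟩
  have hAmeas : MeasurableSet A := by
    rw [hAeq]
    exact MeasurableSet.iUnion fun m =>
      MeasurableSet.iInter fun k => measurableSet_le (hYm k) measurable_const
  have hApre : θ ⁻¹' A = A := by
    ext ω
    simp only [hAdef, Set.mem_preimage, Set.mem_setOf_eq]
    constructor
    · rintro ⟨c, hc⟩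
      refine ⟨c - X1 ω, ?_⟩
      rintro x ⟨k, rfl⟩
      have h := hc (Set.mem_range_self (k + 1))
      rw [hYshift] at h
      linarith
    · rintro ⟨c, hc⟩
      refine ⟨X1 ω + max 0 c, ?_⟩
      rintro x ⟨k, rfl⟩
      show Y k (θ ω) ≤ X1 ω + max 0 c
      cases k with
      | zero =>
        rw [hYshift0]
        have := le_max_left (0 : ℝ) c
        linarith
      | succ k =>
        rw [hYshift]
        have h1 := hc (Set.mem_range_self k)
        have h2 := le_max_right (0 : ℝ) c
        linarith
  rcases hθ.ae_empty_or_univ hAmeas hApre with hA0 | hA1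
  · -- impossible case: a.e. unbounded
    exfalso
    have hnotbdd : ∀ᵐ ω ∂μ, ¬ BddAbove (Set.range fun k => Y k ω) := by
      have h0 : μ A = 0 := ae_eq_empty.mp hA0
      have h := measure_eq_zero_iff_ae_notMem.mp h0
      filter_upwards [h] with ω hω
      exact hω
    have hMtend : ∀ᵐ ω ∂μ, Tendsto (fun n => M n ω) atTop atTop := by
      filter_upwards [hnotbdd] with ω hω
      apply tendsto_atTop_atTop_of_monotone' (monotone_nat_of_le_succ fun n => hMmono n ω)
      intro hbdd
      obtain ⟨c, hc⟩ := hbdd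
      exact hω ⟨c, by
        rintro x ⟨k, rfl⟩
        exact (hYleM k ω).trans (hc (Set.mem_range_self (k + 1)))⟩
    set g : ℕ → Ω → ℝ := fun n ω => max (-(M n ω)) (X1 ω) with hgdef
    have hgm : ∀ n, AEStronglyMeasurable (g n) μ :=
      fun n => ((hMm n).neg.max hX1m).aestronglyMeasurable
    have hgbound : ∀ n, ∀ᵐ ω ∂μ, ‖g n ω‖ ≤ |X1 ω| := by
      intro n
      filter_upwards with ω
      rw [Real.norm_eq_abs, abs_le]
      constructor
      · exact (neg_abs_le _).trans (le_max_right _ _)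
      · refine max_le ?_ (le_abs_self _)
        have := hMnonneg n ω
        have := abs_nonneg (X1 ω)
        linarith
    have hgint : ∀ n, Integrable (g n) μ :=
      fun n => Integrable.mono' hX1int.abs (hgm n) (hgbound n)
    have hge : ∀ n, 0 ≤ ∫ ω, g n ω ∂μ := by
      intro n
      have h1 : ∫ ω, M (n + 1) (θ ω) ∂μ = ∫ ω, M (n + 1) ω ∂μ := by
        have h := hint_comp 1 (M (n + 1)) (hMm (n + 1)).aestronglyMeasurable
        simpa using h
      have h2 : ∫ ω, M (n + 1) (θ ω) ∂μ = ∫ ω, M n ω ∂μ + ∫ ω, g n ω ∂μ := by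
        rw [← integral_add (hMint n) (hgint n)]
        apply integral_congr_ae
        filter_upwards with ω
        rw [hMshift']
      have h3 : ∫ ω, M n ω ∂μ ≤ ∫ ω, M (n + 1) ω ∂μ :=
        integral_mono (hMint n) (hMint (n + 1)) fun ω => hMmono n ω
      linarith
    have hgtend : Tendsto (fun n => ∫ ω, g n ω ∂μ) atTop (nhds (∫ ω, X1 ω ∂μ)) := by
      apply tendsto_integral_of_dominated_convergence (fun ω => |X1 ω|) hgm hX1int.abs hgbound
      filter_upwards [hMtend] with ω hω
      have hev : ∀ᶠ n in atTop, g n ω = X1 ω := by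
        filter_upwards [hω.eventually_ge_atTop (-(X1 ω))] with n hn
        exact max_eq_right (by linarith)
      exact tendsto_const_nhds.congr' (hev.mono fun n h => h.symm)
    have hXneg : ∫ ω, X1 ω ∂μ < 0 := by
      have h : ∫ ω, X1 ω ∂μ = ∫ ω, S 1 ω ∂μ - ∫ ω, T 1 ω ∂μ := by
        simp only [hX1def]
        exact integral_sub hSint hTint
      linarith
    have hev : ∀ᶠ n in atTop, ∫ ω, g n ω ∂μ < 0 := (tendsto_order.1 hgtend).2 0 hXneg
    obtain ⟨n, hn⟩ := hev.exists
    exact absurd hn (not_lt.2 (hge n))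
  · -- main case
    have hae : ∀ᵐ ω ∂μ, ω ∈ A := Filter.eventuallyEq_univ.mp hA1
    constructor
    · filter_upwards [hae] with ω hω
      exact hω
    · intro f
      have hfm : ∀ n, AEStronglyMeasurable (fun ω => f (M n ω)) μ :=
        fun n => (f.continuous.measurable.comp (hMm n)).aestronglyMeasurable
      have hWMint : ∀ n, ∫ ω, f (W n ω) ∂μ = ∫ ω, f (M n ω) ∂μ := by
        intro n
        have h : (fun ω => f (W n ω)) = fun ω => f (M n (θ^[n] ω)) := by
          funext ω; rw [hWM]
        rw [h]
        exact hint_comp n (fun ω => f (M n ω)) (hfm n)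
      have hlim : ∀ᵐ ω ∂μ, Tendsto (fun n => f (M n ω)) atTop
          (nhds (f (max 0 (⨆ k : ℕ, Y k ω)))) := by
        filter_upwards [hae] with ω hω
        obtain ⟨c, hc⟩ := hω
        have hYc : ∀ k, Y k ω ≤ c := fun k => hc (Set.mem_range_self k)
        have hbddM : BddAbove (Set.range fun n => M n ω) :=
          ⟨max 0 c, by rintro x ⟨n, rfl⟩; exact hMleOfY c ω hYc n⟩
        have hbddY : BddAbove (Set.range fun k => Y k ω) :=
          ⟨c, by rintro x ⟨k, rfl⟩; exact hYc k⟩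
        have hmono : Monotone fun n => M n ω := monotone_nat_of_le_succ fun n => hMmono n ω
        have htend := tendsto_atTop_ciSup hmono hbddM
        have heq : (⨆ n : ℕ, M n ω) = max 0 (⨆ k : ℕ, Y k ω) := by
          apply le_antisymm
          · exact ciSup_le fun n => hMleOfY _ ω (fun k => le_ciSup hbddY k) n
          · apply max_le
            · have h := le_ciSup hbddM 0
              rw [hM0] at h
              exact h
            · exact ciSup_le fun k => (hYleM k ω).trans (le_ciSup hbddM (k + 1))
        rw [heq] at htend
        exact (f.continuous.tendsto _).comp htend
      have hmain := tendsto_integral_of_dominated_convergence (fun _ => ‖f‖) hfm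
        (integrable_const _)
        (fun n => Filter.Eventually.of_forall fun ω => f.norm_coe_le_norm _) hlim
      have hcongr : (fun n => ∫ ω, f (M n ω) ∂μ) = fun n => ∫ ω, f (W n ω) ∂μ :=
        funext fun n => (hWMint n).symm
      rw [hcongr] at hmain
      exact hmain
end

section
/- For positive integers m > 1, L (divisible by p_r), i, suppose a round-robin dispatch among k queues of a type receiving p_r out of every ‖p‖ jobs satisfies: between the j-th arrival to a fixed queue in the system with k = p_r·m + i queues and in the system with k = p_r(m−1) + i queues, exactly p_r extra jobs of this type and ‖p‖ − p_r jobs of other types are inserted. Then the inter-arrival counts satisfy a_j^{(p_r m + i)} = a_j^{(p_r(m−1) + i)} + ‖p‖. -/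
/-- Fact 1 of the paper: let `σ : ℕ → Fin R` be a `‖p‖`-periodic dispatch
sequence of type labels with exactly `p r` occurrences of `r` per period, and
let `occ` enumerate (in increasing order) the positions of the occurrences of
type `r`.  Under round-robin among `k` copies, the queue `(r,1)` receives the
occurrences numbered `0, k, 2k, …`, so its `j`-th inter-arrival count is
`occ (j·k) − occ ((j−1)·k)`.  Increasing the number of copies by `p r`
increases each inter-arrival count by exactly `‖p‖`. -/
theorem stmt_17 (R : ℕ) (p : Fin R → ℕ) (hp : ∀ r, 0 < p r)
    (P : ℕ) (hP : P = ∑ r, p r)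
    (σ : ℕ → Fin R) (hper : ∀ n, σ (n + P) = σ n)
    (hcount : ∀ r : Fin R, ((Finset.range P).filter (fun n => σ n = r)).card = p r)
    (r : Fin R) (occ : ℕ → ℕ) (hocc_mono : StrictMono occ)
    (hocc_mem : ∀ m, σ (occ m) = r)
    (hocc_surj : ∀ n, σ n = r → ∃ m, occ m = n)
    (k j : ℕ) (hk : 0 < k) (hj : 1 ≤ j) :
    occ (j * (k + p r)) - occ ((j - 1) * (k + p r)) =
      occ (j * k) - occ ((j - 1) * k) + P := by
  classical
  set f : ℕ → ℕ := fun n => if σ n = r then 1 else 0 with hf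
  -- count in any window of length P is p r
  have hwin : ∀ x, ∑ n ∈ Finset.Ico x (x + P), f n = p r := by
    intro x
    induction x with
    | zero =>
      have := hcount r
      rw [Finset.card_filter] at this
      simpa [f] using this
    | succ x ih =>
      have hx1 : x ≤ x + P := Nat.le_add_right _ _
      have hx2 : x < x + P + 1 := by omega
      have e1 : ∑ n ∈ Finset.Ico x (x + P + 1), f n
          = (∑ n ∈ Finset.Ico x (x + P), f n) + f (x + P) :=
        Finset.sum_Ico_succ_top hx1 f
      have e2 : ∑ n ∈ Finset.Ico x (x + P + 1), f n
          = f x + ∑ n ∈ Finset.Ico (x + 1) (x + P + 1), f n :=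
        Finset.sum_eq_sum_Ico_succ_bot hx2 f
      have hfp : f (x + P) = f x := by simp [f, hper x]
      have : ∑ n ∈ Finset.Ico (x + 1) (x + P + 1), f n
          = ∑ n ∈ Finset.Ico x (x + P), f n := by omega
      have harr : x + 1 + P = x + P + 1 := by omega
      rw [harr, this, ih]
  -- cumulative count
  set c : ℕ → ℕ := fun x => ∑ n ∈ Finset.range x, f n with hc
  have hshift : ∀ x, c (x + P) = c x + p r := by
    intro x
    have : Finset.range (x + P) = Finset.Ico 0 x ∪ Finset.Ico x (x + P) := by
      rw [Finset.range_eq_Ico,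
        Finset.Ico_union_Ico_eq_Ico (Nat.zero_le x) (Nat.le_add_right x P)]
    rw [hc]
    simp only
    rw [this, Finset.sum_union (Finset.Ico_disjoint_Ico_consecutive 0 x (x + P)),
      ← Finset.range_eq_Ico, hwin x]
  -- c (occ m) = m
  have hcocc : ∀ m, c (occ m) = m := by
    intro m
    induction m with
    | zero =>
      rw [hc]
      simp only
      apply Finset.sum_eq_zero
      intro n hn
      simp only [Finset.mem_range] at hn
      by_contra h
      have hσ : σ n = r := by
        by_contra h'
        simp [f, h'] at h
      obtain ⟨m', hm'⟩ := hocc_surj n hσ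
      have := hocc_mono.monotone (Nat.zero_le m')
      omega
    | succ m ih =>
      have hlt : occ m < occ (m + 1) := hocc_mono (Nat.lt_succ_self m)
      have hsplit : Finset.range (occ (m + 1))
          = Finset.Ico 0 (occ m) ∪ Finset.Ico (occ m) (occ (m + 1)) := by
        rw [Finset.range_eq_Ico,
          Finset.Ico_union_Ico_eq_Ico (Nat.zero_le _) (le_of_lt hlt)]
      have hmid : ∑ n ∈ Finset.Ico (occ m) (occ (m + 1)), f n = 1 := by
        have hone : ∀ n ∈ Finset.Ico (occ m) (occ (m + 1)), n ≠ occ m → f n = 0 := by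
          intro n hn hne
          simp only [Finset.mem_Ico] at hn
          by_contra h
          have hσ : σ n = r := by
            by_contra h'
            simp [f, h'] at h
          obtain ⟨m', hm'⟩ := hocc_surj n hσ
          rcases lt_trichotomy m' m with h1 | h1 | h1
          · have := hocc_mono h1; omega
          · subst h1; omega
          · have : m + 1 ≤ m' := h1
            have := hocc_mono.monotone this; omega
        rw [Finset.sum_eq_single_of_mem (occ m) (by simp [Finset.mem_Ico, hlt]) hone]
        simp [f, hocc_mem m]
      rw [hc]
      simp only
      rw [hsplit, Finset.sum_union (Finset.Ico_disjoint_Ico_consecutive 0 _ _),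
        ← Finset.range_eq_Ico, hmid]
      rw [hc] at ih
      simp only at ih
      omega
  -- key: occ (m + p r) = occ m + P
  have hkey : ∀ m, occ (m + p r) = occ m + P := by
    intro m
    have hσ : σ (occ m + P) = r := by rw [hper]; exact hocc_mem m
    obtain ⟨m'', hm''⟩ := hocc_surj _ hσ
    have h1 : c (occ m'') = m'' := hcocc m''
    rw [hm'', hshift, hcocc] at h1
    rw [← h1] at hm''
    exact hm''
  -- iterate
  have hkey' : ∀ t m, occ (m + t * p r) = occ m + t * P := by
    intro t
    induction t with
    | zero => simp
    | succ t ih =>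
      intro m
      have : m + (t + 1) * p r = (m + t * p r) + p r := by ring
      rw [this, hkey, ih, hP]
      ring
  have h1 : occ (j * (k + p r)) = occ (j * k) + j * P := by
    rw [mul_add]; exact hkey' j (j * k)
  have h2 : occ ((j - 1) * (k + p r)) = occ ((j - 1) * k) + (j - 1) * P := by
    rw [mul_add]; exact hkey' (j - 1) ((j - 1) * k)
  have hmono : occ ((j - 1) * k) ≤ occ (j * k) :=
    hocc_mono.monotone (Nat.mul_le_mul_right k (by omega))
  have hjP : j * P = (j - 1) * P + P := by
    have hj' : j = (j - 1) + 1 := by omega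
    rw [hj', add_mul, one_mul]
    simp
  rw [h1, h2, hjP]
  omega
end
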